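/- Let S be a normal idempotent ordered semigroup. Then for all a,b,c ∈ S, abc L bac and abc R acb, where a L b means a ≤ xb and b ≤ ya for some x,y ∈ S, and a R b means a ≤ bx and b ≤ ay for some x,y ∈ S. -/
import Mathlib

private lemma greenL_aux
    {S : Type*} [Semigroup S] [PartialOrder S]
    [CovariantClass S S (· * ·) (· ≤ ·)]
    [CovariantClass S S (Function.swap (· * ·)) (· ≤ ·)]
    (hidem : ∀ a : S, a ≤ a * a)
    (hnormal : ∀ a b c : S, ∃ x : S, a * b * c * a ≤ a * c * x * b * a)
    (a b c : S) : ∃ x : S, a * b * c ≤ x * (b * a * c) := by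
  obtain ⟨x, hx⟩ := hnormal a b c
  obtain ⟨y, hy⟩ := hnormal c (x * b * a) b
  refine ⟨a * c * b * y * x, ?_⟩
  calc a * b * c ≤ a * b * c * (a * b * c) := hidem _
    _ = a * b * c * a * (b * c) := by simp only [mul_assoc]
    _ ≤ a * c * x * b * a * (b * c) := mul_le_mul_left hx _
    _ = a * (c * (x * b * a) * b * c) := by simp only [mul_assoc]
    _ ≤ a * (c * b * y * (x * b * a) * c) := mul_le_mul_right hy a
    _ = a * c * b * y * x * (b * a * c) := by simp only [mul_assoc]

private lemma greenR_aux
    {S : Type*} [Semigroup S] [PartialOrder S]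
    [CovariantClass S S (· * ·) (· ≤ ·)]
    [CovariantClass S S (Function.swap (· * ·)) (· ≤ ·)]
    (hidem : ∀ a : S, a ≤ a * a)
    (hnormal : ∀ a b c : S, ∃ x : S, a * b * c * a ≤ a * c * x * b * a)
    (a b c : S) : ∃ x : S, a * b * c ≤ (a * c * b) * x := by
  obtain ⟨x, hx⟩ := hnormal c a b
  obtain ⟨y, hy⟩ := hnormal a b (c * b * x)
  refine ⟨x * y * b * a * c, ?_⟩
  calc a * b * c ≤ a * b * c * (a * b * c) := hidem _
    _ = a * b * (c * a * b * c) := by simp only [mul_assoc]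
    _ ≤ a * b * (c * b * x * a * c) := mul_le_mul_right hx _
    _ = a * b * (c * b * x) * a * c := by simp only [mul_assoc]
    _ ≤ a * (c * b * x) * y * b * a * c := mul_le_mul_left hy c
    _ = (a * c * b) * (x * y * b * a * c) := by simp only [mul_assoc]

/-- In a normal idempotent ordered semigroup, `abc L bac` and `abc R acb`. -/
theorem greenL_greenR_of_normal
    {S : Type*} [Semigroup S] [PartialOrder S]
    [CovariantClass S S (· * ·) (· ≤ ·)]
    [CovariantClass S S (Function.swap (· * ·)) (· ≤ ·)]
    (hidem : ∀ a : S, a ≤ a * a)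
    (hnormal : ∀ a b c : S, ∃ x : S, a * b * c * a ≤ a * c * x * b * a) :
    ∀ a b c : S,
      ((∃ x : S, a * b * c ≤ x * (b * a * c)) ∧ ∃ y : S, b * a * c ≤ y * (a * b * c)) ∧
      ((∃ x : S, a * b * c ≤ (a * c * b) * x) ∧ ∃ y : S, a * c * b ≤ (a * b * c) * y) := by
  intro a b c
  exact ⟨⟨greenL_aux hidem hnormal a b c, greenL_aux hidem hnormal b a c⟩,
    ⟨greenR_aux hidem hnormal a b c, greenR_aux hidem hnormal a c b⟩⟩
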